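/- (Perturbation stability of Weyl asymptotics / Ky Fan theorem for weak Lorentz ideals) Let g be a continuous RV_ρ-function, ρ < 0. If T is a compact operator with lim_{j→∞} g(j)^{-1} μ_j(T) = c, and S is compact with μ_j(S) = o(g(j)), then lim_{j→∞} g(j)^{-1} μ_j(T + S) = c. -/

import Mathlib

open Filter Topology

set_option maxHeartbeats 1000000

/-- The `j`-th singular value (approximation number) of an operator `T` on a Hilbert space. -/
noncomputable def singVal {H : Type*} [NormedAddCommGroup H] [InnerProductSpace ℂ H]
    (T : H →L[ℂ] H) (j : ℕ) : ℝ :=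
  sInf {c : ℝ | ∃ R : H →L[ℂ] H,
    Module.rank ℂ (LinearMap.range (R : H →ₗ[ℂ] H)) ≤ (j : Cardinal) ∧ c = ‖T - R‖}

section Aux

variable {H : Type*} [NormedAddCommGroup H] [InnerProductSpace ℂ H]

lemma singVal_set_nonempty (T : H →L[ℂ] H) (j : ℕ) :
    {c : ℝ | ∃ R : H →L[ℂ] H,
      Module.rank ℂ (LinearMap.range (R : H →ₗ[ℂ] H)) ≤ (j : Cardinal) ∧ c = ‖T - R‖}.Nonempty :=
  ⟨‖T‖, 0, by
    constructor
    · have h0 : (LinearMap.range ((0 : H →L[ℂ] H) : H →ₗ[ℂ] H)) = ⊥ := by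
        ext x; simp [eq_comm]
      rw [h0, rank_bot]
      exact_mod_cast Nat.cast_nonneg' j
    · simp⟩

lemma singVal_set_bddBelow (T : H →L[ℂ] H) (j : ℕ) :
    BddBelow {c : ℝ | ∃ R : H →L[ℂ] H,
      Module.rank ℂ (LinearMap.range (R : H →ₗ[ℂ] H)) ≤ (j : Cardinal) ∧ c = ‖T - R‖} :=
  ⟨0, fun c ⟨R, _, hc⟩ => hc ▸ norm_nonneg _⟩

lemma singVal_nonneg (T : H →L[ℂ] H) (j : ℕ) : 0 ≤ singVal T j :=
  le_csInf (singVal_set_nonempty T j) (fun c ⟨R, _, hc⟩ => hc ▸ norm_nonneg _)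

lemma singVal_le (T R : H →L[ℂ] H) (j : ℕ)
    (h : Module.rank ℂ (LinearMap.range (R : H →ₗ[ℂ] H)) ≤ (j : Cardinal)) :
    singVal T j ≤ ‖T - R‖ :=
  csInf_le (singVal_set_bddBelow T j) ⟨R, h, rfl⟩

lemma range_neg' (R : H →L[ℂ] H) : LinearMap.range ((-R : H →L[ℂ] H) : H →ₗ[ℂ] H) = LinearMap.range (R : H →ₗ[ℂ] H) := by
  ext x; constructor
  · rintro ⟨y, rfl⟩; exact ⟨-y, by simp⟩
  · rintro ⟨y, rfl⟩; exact ⟨-y, by simp⟩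

lemma singVal_neg (S : H →L[ℂ] H) (j : ℕ) : singVal (-S) j = singVal S j := by
  unfold singVal
  congr 1
  ext c
  constructor
  · rintro ⟨R, hR, rfl⟩
    exact ⟨-R, by rw [range_neg']; exact hR,
      by rw [show S - -R = -(-S - R) by abel, norm_neg]⟩
  · rintro ⟨R, hR, rfl⟩
    exact ⟨-R, by rw [range_neg']; exact hR,
      by rw [show -S - -R = -(S - R) by abel, norm_neg]⟩

lemma singVal_fan (A B : H →L[ℂ] H) (a b : ℕ) :
    singVal (A + B) (a + b) ≤ singVal A a + singVal B b := by
  refine le_of_forall_pos_le_add fun ε hε => ?_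
  obtain ⟨c₁, ⟨R₁, hR₁, rfl⟩, h₁⟩ :=
    exists_lt_of_csInf_lt (singVal_set_nonempty A a)
      (show singVal A a < singVal A a + ε / 2 by linarith)
  obtain ⟨c₂, ⟨R₂, hR₂, rfl⟩, h₂⟩ :=
    exists_lt_of_csInf_lt (singVal_set_nonempty B b)
      (show singVal B b < singVal B b + ε / 2 by linarith)
  have hrank : Module.rank ℂ (LinearMap.range ((R₁ + R₂ : H →L[ℂ] H) : H →ₗ[ℂ] H)) ≤ ((a + b : ℕ) : Cardinal) := by
    have hsub : LinearMap.range ((R₁ + R₂ : H →L[ℂ] H) : H →ₗ[ℂ] H) ≤ LinearMap.range (R₁ : H →ₗ[ℂ] H) ⊔ LinearMap.range (R₂ : H →ₗ[ℂ] H) := by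
      rintro x ⟨y, rfl⟩
      exact Submodule.add_mem_sup ⟨y, rfl⟩ ⟨y, rfl⟩
    calc Module.rank ℂ (LinearMap.range ((R₁ + R₂ : H →L[ℂ] H) : H →ₗ[ℂ] H))
        ≤ Module.rank ℂ ((LinearMap.range (R₁ : H →ₗ[ℂ] H) ⊔ LinearMap.range (R₂ : H →ₗ[ℂ] H) : Submodule ℂ H)) :=
          Submodule.rank_mono hsub
      _ ≤ Module.rank ℂ (LinearMap.range (R₁ : H →ₗ[ℂ] H)) + Module.rank ℂ (LinearMap.range (R₂ : H →ₗ[ℂ] H)) :=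
          Submodule.rank_add_le_rank_add_rank _ _
      _ ≤ (a : Cardinal) + (b : Cardinal) := add_le_add hR₁ hR₂
      _ = ((a + b : ℕ) : Cardinal) := by simp
  calc singVal (A + B) (a + b) ≤ ‖(A + B) - (R₁ + R₂)‖ := singVal_le _ _ _ hrank
    _ = ‖(A - R₁) + (B - R₂)‖ := by congr 1; abel
    _ ≤ ‖A - R₁‖ + ‖B - R₂‖ := norm_add_le _ _
    _ ≤ singVal A a + singVal B b + ε := by linarith

end Aux

/-- Perturbation stability of Weyl asymptotics (Ky Fan theorem for weak Lorentz ideals):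
if `g(j)⁻¹ μ_j(T) → c` and `μ_j(S) = o(g j)`, then `g(j)⁻¹ μ_j(T + S) → c`. -/
theorem kyFan_weakLorentz {H : Type*} [NormedAddCommGroup H]
    [InnerProductSpace ℂ H] [CompleteSpace H]
    (ρ : ℝ) (hρ : ρ < 0) (g : ℝ → ℝ)
    (hpos : ∀ t ∈ Set.Ici (0:ℝ), 0 < g t)
    (hcont : ContinuousOn g (Set.Ici (0:ℝ)))
    (hdec : ∃ b ≥ (0:ℝ), AntitoneOn g (Set.Ici b))
    (hrv : ∀ l : ℝ, 0 < l → Tendsto (fun t => g (l * t) / g t) atTop (𝓝 (l ^ ρ)))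
    (T S : H →L[ℂ] H) (hTc : IsCompactOperator T) (hSc : IsCompactOperator S)
    (c : ℝ)
    (hT : Tendsto (fun j : ℕ => (g j)⁻¹ * singVal T j) atTop (𝓝 c))
    (hS : (fun j : ℕ => singVal S j) =o[atTop] fun j : ℕ => g j) :
    Tendsto (fun j : ℕ => (g j)⁻¹ * singVal (T + S) j) atTop (𝓝 c) := by
  clear hTc hSc hcont
  obtain ⟨b₀, hb₀0, hanti⟩ := hdec
  have hg : ∀ t : ℝ, 0 ≤ t → 0 < g t := fun t ht => hpos t ht
  have hgn : ∀ j : ℕ, 0 < g (j : ℝ) := fun j => hg _ (Nat.cast_nonneg j)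
  have hc0 : 0 ≤ c := by
    refine ge_of_tendsto' hT fun j => ?_
    have h1 := singVal_nonneg T j
    have h2 := hgn j
    positivity
  have hs0 : Tendsto (fun j : ℕ => (g j)⁻¹ * singVal S j) atTop (𝓝 0) := by
    have := hS.tendsto_div_nhds_zero
    simpa [div_eq_inv_mul] using this
  have hr : ∀ l : ℝ, 0 < l →
      Tendsto (fun j : ℕ => g (l * j) / g j) atTop (𝓝 (l ^ ρ)) :=
    fun l hl => (hrv l hl).comp tendsto_natCast_atTop_atTop
  rw [Metric.tendsto_atTop]
  intro ε hε
  -- choose δ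
  obtain ⟨δ, hδ1, hδ2, hδ3, hδpos⟩ : ∃ δ : ℝ,
      c * (1 - δ) ^ ρ < c + ε / 4 ∧ c - ε / 4 < c * (1 + δ) ^ ρ ∧ δ < 1/2 ∧ 0 < δ := by
    have h1 : Tendsto (fun δ : ℝ => c * (1 - δ) ^ ρ) (𝓝 0) (𝓝 c) := by
      have hf : ContinuousAt (fun δ : ℝ => 1 - δ) 0 := by fun_prop
      have hgc : ContinuousAt (fun x : ℝ => x ^ ρ) ((fun δ : ℝ => 1 - δ) 0) := by
        simp only [sub_zero]
        exact Real.continuousAt_rpow_const 1 ρ (Or.inl one_ne_zero)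
      have hc1 : ContinuousAt (fun δ : ℝ => c * (1 - δ) ^ ρ) 0 :=
        continuousAt_const.mul (hgc.comp hf)
      have := hc1.tendsto
      simpa using this
    have h2 : Tendsto (fun δ : ℝ => c * (1 + δ) ^ ρ) (𝓝 0) (𝓝 c) := by
      have hf : ContinuousAt (fun δ : ℝ => 1 + δ) 0 := by fun_prop
      have hgc : ContinuousAt (fun x : ℝ => x ^ ρ) ((fun δ : ℝ => 1 + δ) 0) := by
        simp only [add_zero]
        exact Real.continuousAt_rpow_const 1 ρ (Or.inl one_ne_zero)
      have hc1 : ContinuousAt (fun δ : ℝ => c * (1 + δ) ^ ρ) 0 :=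
        continuousAt_const.mul (hgc.comp hf)
      have := hc1.tendsto
      simpa using this
    have e1 : ∀ᶠ δ in 𝓝[>] (0:ℝ), c * (1 - δ) ^ ρ < c + ε / 4 :=
      ((h1.mono_left nhdsWithin_le_nhds).eventually_lt_const (by linarith))
    have e2 : ∀ᶠ δ in 𝓝[>] (0:ℝ), c - ε / 4 < c * (1 + δ) ^ ρ :=
      ((h2.mono_left nhdsWithin_le_nhds).eventually_const_lt (by linarith))
    have e3 : ∀ᶠ δ in 𝓝[>] (0:ℝ), δ < 1/2 :=
      ((tendsto_id.mono_left nhdsWithin_le_nhds).eventually_lt_const (by norm_num))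
    have e4 : ∀ᶠ δ in 𝓝[>] (0:ℝ), 0 < δ := self_mem_nhdsWithin
    obtain ⟨δ, hδ⟩ := (((e1.and e2).and e3).and e4).exists
    exact ⟨δ, hδ.1.1.1, hδ.1.1.2, hδ.1.2, hδ.2⟩
  have hδ1' : (0:ℝ) < 1 - δ := by linarith
  have hδ2' : (0:ℝ) < δ / 2 := by linarith
  set b : ℕ → ℕ := fun j => ⌊δ * (j : ℝ)⌋₊ with hb_def
  have hble : ∀ j : ℕ, (b j : ℝ) ≤ δ * j := fun j => Nat.floor_le (by positivity)
  have hbj : ∀ j : ℕ, b j ≤ j := by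
    intro j
    have h1 : (b j : ℝ) ≤ (j : ℝ) := by
      have := hble j
      nlinarith [(Nat.cast_nonneg j : (0:ℝ) ≤ (j:ℝ))]
    exact_mod_cast h1
  have htb : Tendsto b atTop atTop :=
    tendsto_nat_floor_atTop.comp
      ((tendsto_const_mul_atTop_of_pos hδpos).2 tendsto_natCast_atTop_atTop)
  have hta : Tendsto (fun j : ℕ => j - b j) atTop atTop := by
    rw [tendsto_atTop]
    intro N
    have hev : ∀ᶠ j : ℕ in atTop, (N : ℝ) ≤ (1 - δ) * j :=
      (((tendsto_const_mul_atTop_of_pos hδ1').2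
        tendsto_natCast_atTop_atTop).eventually_ge_atTop _)
    filter_upwards [hev] with j hj
    have h1 : ((j - b j : ℕ) : ℝ) = (j : ℝ) - b j := by
      rw [Nat.cast_sub (hbj j)]
    have h2 : (N : ℝ) ≤ ((j - b j : ℕ) : ℝ) := by
      rw [h1]; have := hble j; nlinarith
    exact_mod_cast h2
  have htab : Tendsto (fun j : ℕ => j + b j) atTop atTop :=
    tendsto_atTop_mono (fun j => Nat.le_add_right j (b j)) tendsto_id
  -- composite limits
  have hua : Tendsto (fun j : ℕ => (g ((j - b j : ℕ) : ℝ))⁻¹ * singVal T (j - b j))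
      atTop (𝓝 c) := hT.comp hta
  have hub : Tendsto (fun j : ℕ => (g ((j + b j : ℕ) : ℝ))⁻¹ * singVal T (j + b j))
      atTop (𝓝 c) := hT.comp htab
  have hsb : Tendsto (fun j : ℕ => (g ((b j : ℕ) : ℝ))⁻¹ * singVal S (b j))
      atTop (𝓝 0) := hs0.comp htb
  -- limits of bounding sequences
  have hA : Tendsto (fun j : ℕ =>
      (g ((j - b j : ℕ) : ℝ))⁻¹ * singVal T (j - b j) * (g ((1 - δ) * j) / g j)
        + (g ((b j : ℕ) : ℝ))⁻¹ * singVal S (b j) * (g ((δ/2) * j) / g j))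
      atTop (𝓝 (c * (1 - δ) ^ ρ + 0 * (δ/2) ^ ρ)) :=
    (hua.mul (hr _ hδ1')).add (hsb.mul (hr _ hδ2'))
  have hB : Tendsto (fun j : ℕ =>
      (g ((j + b j : ℕ) : ℝ))⁻¹ * singVal T (j + b j) * (g ((1 + δ) * j) / g j)
        - (g ((b j : ℕ) : ℝ))⁻¹ * singVal S (b j) * (g ((δ/2) * j) / g j))
      atTop (𝓝 (c * (1 + δ) ^ ρ - 0 * (δ/2) ^ ρ)) :=
    (hub.mul (hr _ (by linarith))).sub (hsb.mul (hr _ hδ2'))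
  have hAev := hA.eventually_lt_const
    (show c * (1 - δ) ^ ρ + 0 * (δ/2) ^ ρ < c + ε / 2 by rw [zero_mul, add_zero]; linarith)
  have hBev := hB.eventually_const_lt
    (show c - ε / 2 < c * (1 + δ) ^ ρ - 0 * (δ/2) ^ ρ by rw [zero_mul, sub_zero]; linarith)
  -- eventual size conditions
  have hcond : ∀ᶠ j : ℕ in atTop,
      b₀ ≤ (δ/2) * j ∧ b₀ ≤ (1 - δ) * j ∧ b₀ ≤ (j : ℝ) ∧ 1 ≤ (δ/2) * j := by
    have t1 := ((tendsto_const_mul_atTop_of_pos hδ2').2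
      tendsto_natCast_atTop_atTop).eventually_ge_atTop b₀
    have t2 := ((tendsto_const_mul_atTop_of_pos hδ1').2
      tendsto_natCast_atTop_atTop).eventually_ge_atTop b₀
    have t3 := (tendsto_natCast_atTop_atTop (R := ℝ) : Tendsto (fun j : ℕ => (j:ℝ)) atTop atTop).eventually_ge_atTop b₀
    have t4 := ((tendsto_const_mul_atTop_of_pos hδ2').2
      tendsto_natCast_atTop_atTop).eventually_ge_atTop 1
    filter_upwards [t1, t2, t3, t4] with j h1 h2 h3 h4
    exact ⟨h1, h2, h3, h4⟩
  -- per-j inequalities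
  have hkey : ∀ᶠ j : ℕ in atTop,
      ((g ((j + b j : ℕ) : ℝ))⁻¹ * singVal T (j + b j) * (g ((1 + δ) * j) / g j)
        - (g ((b j : ℕ) : ℝ))⁻¹ * singVal S (b j) * (g ((δ/2) * j) / g j)
        ≤ (g j)⁻¹ * singVal (T + S) j) ∧
      ((g j)⁻¹ * singVal (T + S) j
        ≤ (g ((j - b j : ℕ) : ℝ))⁻¹ * singVal T (j - b j) * (g ((1 - δ) * j) / g j)
        + (g ((b j : ℕ) : ℝ))⁻¹ * singVal S (b j) * (g ((δ/2) * j) / g j)) := by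
    filter_upwards [hcond] with j ⟨hc1, hc2, hc3, hc4⟩
    have hgj := hgn j
    have hgbj := hgn (b j)
    have hgaj := hgn (j - b j)
    have hgsj := hgn (j + b j)
    have hg1 := hg _ (le_trans (by positivity) hc1)  -- 0 < g ((δ/2)*j)
    have hg2 := hg _ (le_trans (by positivity) hc2)
    have hg3 := hg _ (by positivity : (0:ℝ) ≤ (1 + δ) * j)
    -- real casts
    have hcast_sub : ((j - b j : ℕ) : ℝ) = (j : ℝ) - b j := Nat.cast_sub (hbj j)
    have hcast_add : ((j + b j : ℕ) : ℝ) = (j : ℝ) + b j := by push_cast; ring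
    have hbge : (δ/2) * j ≤ (b j : ℝ) := by
      have := Nat.sub_one_lt_floor (δ * (j : ℝ))
      have : δ * j - 1 < (b j : ℝ) := this
      nlinarith
    -- monotonicity facts
    have mono1 : g ((j - b j : ℕ) : ℝ) ≤ g ((1 - δ) * j) := by
      apply hanti (Set.mem_Ici.2 hc2)
      · rw [Set.mem_Ici, hcast_sub]
        have := hble j; linarith
      · rw [hcast_sub]; have := hble j; linarith
    have mono2 : g ((b j : ℕ) : ℝ) ≤ g ((δ/2) * j) := by
      apply hanti (Set.mem_Ici.2 hc1)
      · rw [Set.mem_Ici]; linarith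
      · exact hbge
    have mono3 : g ((1 + δ) * j) ≤ g ((j + b j : ℕ) : ℝ) := by
      apply hanti
      · rw [Set.mem_Ici, hcast_add]
        have : (0:ℝ) ≤ ((b j : ℕ):ℝ) := Nat.cast_nonneg _
        linarith
      · rw [Set.mem_Ici]
        have : (0:ℝ) ≤ (j:ℝ) := Nat.cast_nonneg _
        nlinarith
      · rw [hcast_add]; have := hble j; linarith
    -- nonnegativity
    have nn1 : 0 ≤ (g ((j - b j : ℕ) : ℝ))⁻¹ * singVal T (j - b j) := by
      have := singVal_nonneg T (j - b j); positivity
    have nn2 : 0 ≤ (g ((b j : ℕ) : ℝ))⁻¹ * singVal S (b j) := by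
      have := singVal_nonneg S (b j); positivity
    have nn3 : 0 ≤ (g ((j + b j : ℕ) : ℝ))⁻¹ * singVal T (j + b j) := by
      have := singVal_nonneg T (j + b j); positivity
    have gen : ∀ x A B : ℝ, A ≠ 0 → B ≠ 0 → B⁻¹ * x = A⁻¹ * x * (A / B) := by
      intro x A B hA hB
      field_simp
    constructor
    · -- lower bound
      have fan : singVal T (j + b j) ≤ singVal (T + S) j + singVal S (b j) := by
        have h := singVal_fan (T + S) (-S) j (b j)
        rw [show (T + S) + (-S) = T by abel, singVal_neg] at h
        exact h
      have step1 : (g j)⁻¹ * singVal T (j + b j)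
          ≤ (g j)⁻¹ * singVal (T + S) j + (g j)⁻¹ * singVal S (b j) := by
        rw [← mul_add]
        exact mul_le_mul_of_nonneg_left fan (by positivity)
      have e1 : (g j)⁻¹ * singVal T (j + b j)
          = (g ((j + b j : ℕ) : ℝ))⁻¹ * singVal T (j + b j)
            * (g ((j + b j : ℕ) : ℝ) / g j) :=
        gen _ _ _ (ne_of_gt hgsj) (ne_of_gt hgj)
      have e2 : (g j)⁻¹ * singVal S (b j)
          = (g ((b j : ℕ) : ℝ))⁻¹ * singVal S (b j) * (g ((b j : ℕ) : ℝ) / g j) :=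
        gen _ _ _ (ne_of_gt hgbj) (ne_of_gt hgj)
      have ge1 : (g ((j + b j : ℕ) : ℝ))⁻¹ * singVal T (j + b j) * (g ((1 + δ) * j) / g j)
          ≤ (g j)⁻¹ * singVal T (j + b j) := by
        rw [e1, div_eq_mul_inv, div_eq_mul_inv]
        exact mul_le_mul_of_nonneg_left
          (mul_le_mul_of_nonneg_right mono3 (inv_nonneg.2 hgj.le)) nn3
      have le2 : (g j)⁻¹ * singVal S (b j)
          ≤ (g ((b j : ℕ) : ℝ))⁻¹ * singVal S (b j) * (g ((δ/2) * j) / g j) := by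
        rw [e2, div_eq_mul_inv, div_eq_mul_inv]
        exact mul_le_mul_of_nonneg_left
          (mul_le_mul_of_nonneg_right mono2 (inv_nonneg.2 hgj.le)) nn2
      linarith
    · -- upper bound
      have fan : singVal (T + S) j ≤ singVal T (j - b j) + singVal S (b j) := by
        have h := singVal_fan T S (j - b j) (b j)
        rwa [Nat.sub_add_cancel (hbj j)] at h
      have step1 : (g j)⁻¹ * singVal (T + S) j
          ≤ (g j)⁻¹ * singVal T (j - b j) + (g j)⁻¹ * singVal S (b j) := by
        rw [← mul_add]
        exact mul_le_mul_of_nonneg_left fan (by positivity)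
      have e1 : (g j)⁻¹ * singVal T (j - b j)
          = (g ((j - b j : ℕ) : ℝ))⁻¹ * singVal T (j - b j)
            * (g ((j - b j : ℕ) : ℝ) / g j) :=
        gen _ _ _ (ne_of_gt hgaj) (ne_of_gt hgj)
      have e2 : (g j)⁻¹ * singVal S (b j)
          = (g ((b j : ℕ) : ℝ))⁻¹ * singVal S (b j) * (g ((b j : ℕ) : ℝ) / g j) :=
        gen _ _ _ (ne_of_gt hgbj) (ne_of_gt hgj)
      have le1 : (g j)⁻¹ * singVal T (j - b j)
          ≤ (g ((j - b j : ℕ) : ℝ))⁻¹ * singVal T (j - b j) * (g ((1 - δ) * j) / g j) := by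
        rw [e1, div_eq_mul_inv, div_eq_mul_inv]
        exact mul_le_mul_of_nonneg_left
          (mul_le_mul_of_nonneg_right mono1 (inv_nonneg.2 hgj.le)) nn1
      have le2 : (g j)⁻¹ * singVal S (b j)
          ≤ (g ((b j : ℕ) : ℝ))⁻¹ * singVal S (b j) * (g ((δ/2) * j) / g j) := by
        rw [e2, div_eq_mul_inv, div_eq_mul_inv]
        exact mul_le_mul_of_nonneg_left
          (mul_le_mul_of_nonneg_right mono2 (inv_nonneg.2 hgj.le)) nn2
      linarith
  have hfin : ∀ᶠ j : ℕ in atTop, dist ((g j)⁻¹ * singVal (T + S) j) c < ε := by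
    filter_upwards [hkey, hAev, hBev] with j ⟨hlo, hhi⟩ hA' hB'
    rw [Real.dist_eq, abs_lt]
    constructor <;> linarith
  exact eventually_atTop.1 hfin
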